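/- Fix α > 0. For n ∈ ℕ let D_n = { z ∈ ℤ² : ‖z‖_∞ = n }, and for x ∈ ℝ² with x ∉ D_n define Z_n(x) = Σ_{y∈D_n} |y − x|^{−2−α}, where |·| is the Euclidean norm. Then there exists a constant a > 1, depending only on α, such that for all integers m, n ≥ 1 with m ≠ n and all x ∈ D_m: if m < n then a^{−1}·(n−m)^{−1−α} ≤ Z_n(x) ≤ a·(n−m)^{−1−α}, and if m > n then a^{−1}·n/(m·(m−n)^{1+α}) ≤ Z_n(x) ≤ a·n/(m·(m−n)^{1+α}). -/

import Mathlib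

/-- `Z_n(x) = Σ_{z ∈ ℤ², ‖z‖_∞ = n} |z − x|^{−2−α}`, Euclidean distance, `x ∈ ℝ²`. -/
noncomputable def Zsq (α : ℝ) (n : ℕ) (x : ℝ × ℝ) : ℝ :=
  ∑' z : ℤ × ℤ, if max |z.1| |z.2| = (n : ℤ) then
    Real.sqrt (((z.1 : ℝ) - x.1) ^ 2 + ((z.2 : ℝ) - x.2) ^ 2) ^ (-(2 + α)) else 0

open Finset Real

/-!
For `x ∈ D_m` and `z ∈ D_n` the sup-distance `‖z - x‖_∞` is at least `d = |m - n|`. Along each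
of the four sides of `D_n` the kernel is therefore at most `max(d, |s - w|)^{-(2+α)}`, whose sum
over `s ∈ ℤ` is `O(d^{-(1+α)})`; together with the trivial bound `(2n + 1) d^{-(2+α)}` per side,
`Z_n(x) = O(min(n, d) d^{-(2+α)})`. Conversely, a symmetry of the square moves `x` to `(m, b)` with
`0 ≤ b ≤ m`, and then the side `{n} × [-n, n]` contains `min(n, d)` points within distance `3d`.
Finally `min(n, d) = d` if `m < n`, while `min(n, d)` is within a factor `2` of `nd / m` if `n < m`.
-/

noncomputable def rieszKernel (α a b : ℝ) : ℝ := √(a ^ 2 + b ^ 2) ^ (-(2 + α))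

lemma rieszKernel_comm (α a b : ℝ) : rieszKernel α a b = rieszKernel α b a := by
  rw [rieszKernel, rieszKernel, add_comm]

lemma rieszKernel_nonneg (α a b : ℝ) : 0 ≤ rieszKernel α a b :=
  rpow_nonneg (sqrt_nonneg _) _

lemma rieszKernel_le {α : ℝ} (hα : 0 ≤ 2 + α) {a b e : ℝ} (he : 0 < e) (hab : e ≤ max |a| |b|) :
    rieszKernel α a b ≤ max e |b| ^ (-(2 + α)) := by
  refine rpow_le_rpow_of_nonpos (lt_max_of_lt_left he) ?_ (by linarith)
  have ha : |a| ≤ √(a ^ 2 + b ^ 2) := abs_le_sqrt (by nlinarith)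
  have hb : |b| ≤ √(a ^ 2 + b ^ 2) := abs_le_sqrt (by nlinarith)
  exact max_le (hab.trans (max_le ha hb)) hb

lemma rpow_le_rieszKernel {α : ℝ} (hα : 0 ≤ 2 + α) {a b R : ℝ} (hR : 0 ≤ R)
    (hpos : 0 < a ^ 2 + b ^ 2) (hle : a ^ 2 + b ^ 2 ≤ R ^ 2) :
    R ^ (-(2 + α)) ≤ rieszKernel α a b :=
  rpow_le_rpow_of_nonpos (sqrt_pos.mpr hpos) ((sqrt_le_left hR).mpr hle) (by linarith)

lemma mem_box_iff_max_abs {n : ℕ} {z : ℤ × ℤ} : z ∈ box n ↔ max |z.1| |z.2| = n := by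
  rw [Int.mem_box, Int.abs_eq_natAbs, Int.abs_eq_natAbs]
  omega

lemma Zsq_eq_sum (α : ℝ) (n : ℕ) (x : ℝ × ℝ) :
    Zsq α n x = ∑ z ∈ (box n : Finset (ℤ × ℤ)), rieszKernel α (z.1 - x.1) (z.2 - x.2) := by
  rw [Zsq, tsum_eq_sum (s := box n)]
  · exact sum_congr rfl fun z hz => if_pos (mem_box_iff_max_abs.mp hz)
  · exact fun z hz => if_neg (mt mem_box_iff_max_abs.mpr hz)

lemma Zsq_swap (α : ℝ) (n : ℕ) (p q : ℝ) : Zsq α n (q, p) = Zsq α n (p, q) := by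
  rw [Zsq, Zsq, ← (Equiv.prodComm ℤ ℤ).tsum_eq]
  simp only [Equiv.prodComm_apply, Prod.fst_swap, Prod.snd_swap, max_comm, add_comm]

lemma Zsq_neg_fst (α : ℝ) (n : ℕ) (p q : ℝ) : Zsq α n (-p, q) = Zsq α n (p, q) := by
  rw [Zsq, Zsq, ← ((Equiv.neg ℤ).prodCongr (Equiv.refl ℤ)).tsum_eq]
  simp only [Equiv.prodCongr_apply, Equiv.neg_apply, Equiv.refl_apply, Prod.map, abs_neg,
    Int.cast_neg, neg_sub_neg, ← neg_sub p, neg_sq]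

lemma Zsq_abs (α : ℝ) (n : ℕ) (p q : ℝ) : Zsq α n (|p|, |q|) = Zsq α n (p, q) := by
  have hq : Zsq α n (p, |q|) = Zsq α n (p, q) := by
    rcases abs_choice q with h | h <;> rw [h]
    rw [← Zsq_swap, Zsq_neg_fst, Zsq_swap]
  rcases abs_choice p with h | h <;> rw [h, ← hq]
  rw [Zsq_neg_fst]

lemma exists_Zsq_eq_side (α : ℝ) (n : ℕ) {m : ℕ} {x : ℤ × ℤ} (hx : x ∈ box m) :
    ∃ b : ℤ, 0 ≤ b ∧ b ≤ m ∧ Zsq α n (x.1, x.2) = Zsq α n (m, b) := by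
  rw [mem_box_iff_max_abs] at hx
  rcases le_total |x.2| |x.1| with h | h
  · refine ⟨|x.2|, abs_nonneg _, hx ▸ le_max_right _ _, ?_⟩
    rw [← Zsq_abs, ← Int.cast_abs, ← Int.cast_abs, ← max_eq_left h, hx, Int.cast_natCast]
  · refine ⟨|x.1|, abs_nonneg _, hx ▸ le_max_left _ _, ?_⟩
    rw [← Zsq_swap, ← Zsq_abs, ← Int.cast_abs, ← Int.cast_abs, ← max_eq_right h, hx,
      Int.cast_natCast]

/-- The increment of `t ↦ t / (e + |t|)` on `[u, u + 1]` is about `e / (e + |u|)²`. -/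
lemma mul_inv_sq_max_abs_le_sub {e : ℝ} (he : 1 ≤ e) (u : ℤ) :
    e * (max e |(u : ℝ)| ^ 2)⁻¹ ≤
      6 * ((u + 1 : ℝ) / (e + |(u + 1 : ℝ)|) - u / (e + |(u : ℝ)|)) := by
  set M := max e |(u : ℝ)|
  set D := (u + 1 : ℝ) / (e + |(u + 1 : ℝ)|) - u / (e + |(u : ℝ)|) with hD_def
  have he0 : 0 < e := by linarith
  have hM : e ≤ M := le_max_left _ _
  have hMu : |(u : ℝ)| ≤ M := le_max_right _ _
  obtain ⟨P, hP0, hPM, hDP⟩ : ∃ P : ℝ, 0 < P ∧ P ≤ 6 * M ^ 2 ∧ D = e / P := by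
    rcases le_or_gt 0 u with hu | hu
    · have hu' : (0 : ℝ) ≤ u := by exact_mod_cast hu
      rw [abs_of_nonneg hu'] at hMu
      have hP := mul_le_mul (show e + u ≤ 2 * M by linarith) (show e + u + 1 ≤ 3 * M by linarith)
        (by positivity) (by positivity)
      refine ⟨(e + u) * (e + u + 1), by positivity, by linarith, ?_⟩
      rw [hD_def, abs_of_nonneg hu', abs_of_nonneg (by linarith),
        div_sub_div _ _ (by linarith) (by linarith)]
      congr 1 <;> ring
    · have hu' : (u : ℝ) ≤ -1 := by exact_mod_cast Int.le_sub_one_of_lt hu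
      rw [abs_of_neg (by linarith)] at hMu
      have hP := mul_le_mul (show e - u - 1 ≤ 2 * M by linarith) (show e - u ≤ 3 * M by linarith)
        (by linarith) (by positivity)
      refine ⟨(e - u - 1) * (e - u), by nlinarith, by linarith, ?_⟩
      rw [hD_def, abs_of_nonpos (show (u : ℝ) + 1 ≤ 0 by linarith), abs_of_neg (by linarith),
        show e + -((u : ℝ) + 1) = e - u - 1 by ring, show e + -(u : ℝ) = e - u by ring,
        div_sub_div _ _ (by linarith) (by linarith)]
      congr 1
      ring
  rw [hDP, ← div_eq_mul_inv, mul_div_assoc', div_le_div_iff₀ (by positivity) hP0]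
  nlinarith [mul_le_mul_of_nonneg_left hPM he0.le]

lemma max_abs_rpow_le_mul_sub {α e : ℝ} (hα : 0 ≤ α) (he : 1 ≤ e) (u : ℤ) :
    max e |(u : ℝ)| ^ (-(2 + α)) ≤
      6 * e ^ (-(1 + α)) * ((u + 1 : ℝ) / (e + |(u + 1 : ℝ)|) - u / (e + |(u : ℝ)|)) := by
  set M := max e |(u : ℝ)|
  have he0 : 0 < e := by linarith
  have hM : e ≤ M := le_max_left _ _
  have hM0 : 0 < M := he0.trans_le hM
  calc M ^ (-(2 + α)) = M ^ (-α) * (M ^ 2)⁻¹ := by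
        rw [show -(2 + α) = -α + -2 by ring, rpow_add hM0, rpow_neg hM0.le 2, rpow_two]
    _ ≤ e ^ (-α) * (M ^ 2)⁻¹ :=
        mul_le_mul_of_nonneg_right (rpow_le_rpow_of_nonpos he0 hM (by linarith)) (by positivity)
    _ = e ^ (-(1 + α)) * (e * (M ^ 2)⁻¹) := by
      rw [show -α = -(1 + α) + 1 by ring, rpow_add he0, rpow_one, mul_assoc]
    _ ≤ e ^ (-(1 + α)) * (6 * ((u + 1 : ℝ) / (e + |(u + 1 : ℝ)|) - u / (e + |(u : ℝ)|))) :=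
        mul_le_mul_of_nonneg_left (mul_inv_sq_max_abs_le_sub he u) (by positivity)
    _ = _ := by ring

lemma sum_max_abs_rpow_le {α e : ℝ} (hα : 0 ≤ α) (he : 1 ≤ e) (T : Finset ℤ) :
    ∑ u ∈ T, max e |(u : ℝ)| ^ (-(2 + α)) ≤ 12 * e ^ (-(1 + α)) := by
  set f : ℤ → ℝ := fun t => -(t / (e + |(t : ℝ)|))
  obtain ⟨K, hK⟩ : ∃ K : ℕ, T ⊆ Ico (-K : ℤ) K := by
    refine ⟨T.sup Int.natAbs + 1, fun u hu => ?_⟩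
    have := le_sup (f := Int.natAbs) hu
    rw [mem_Ico]
    omega
  have hfK : f (-K) - f K ≤ 2 := by
    have h : (K : ℝ) / (e + K) ≤ 1 := div_le_one_of_le₀ (by linarith) (by positivity)
    simp only [f, Int.cast_neg, Int.cast_natCast, abs_neg, Nat.abs_cast, neg_div, neg_neg]
    linarith
  calc ∑ u ∈ T, max e |(u : ℝ)| ^ (-(2 + α))
      ≤ ∑ u ∈ Ico (-K : ℤ) K, max e |(u : ℝ)| ^ (-(2 + α)) :=
        sum_le_sum_of_subset_of_nonneg hK fun u _ _ => by positivity
    _ ≤ ∑ u ∈ Ico (-K : ℤ) K, 6 * e ^ (-(1 + α)) * (f u - f (u + 1)) := by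
        refine sum_le_sum fun u _ => ?_
        simpa only [f, neg_sub_neg, Int.cast_add, Int.cast_one] using
          max_abs_rpow_le_mul_sub hα he u
    _ = 6 * e ^ (-(1 + α)) * (f (-K) - f K) := by rw [← mul_sum, sum_Ico_int_sub]
    _ ≤ 12 * e ^ (-(1 + α)) := by nlinarith [rpow_nonneg (show (0:ℝ) ≤ e by linarith) (-(1 + α))]

lemma le_max_abs_sub_of_mem_box {m n d : ℕ} (hd : m + d = n ∨ n + d = m) {x z : ℤ × ℤ}
    (hx : x ∈ box m) (hz : z ∈ box n) : (d : ℤ) ≤ max |z.1 - x.1| |z.2 - x.2| := by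
  rw [Int.mem_box] at hx hz
  rw [Int.abs_eq_natAbs, Int.abs_eq_natAbs]
  omega

lemma rpow_neg_one_add_eq_mul {x : ℝ} (hx : 0 < x) (α : ℝ) :
    x ^ (-(1 + α)) = x * x ^ (-(2 + α)) := by
  rw [show -(1 + α) = 1 + -(2 + α) by ring, rpow_add hx, rpow_one]

lemma sum_rieszKernel_side_le {α : ℝ} (hα : 0 ≤ α) {m n d : ℕ} (hn : 1 ≤ n)
    (hd : m + d = n ∨ n + d = m) (hd0 : 1 ≤ d) {x : ℤ × ℤ} (hx : x ∈ box m) {c : ℤ}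
    (hc : c.natAbs = n) :
    ∑ s ∈ Icc (-n : ℤ) n, rieszKernel α (c - x.1) (s - x.2) ≤
      12 * min (n : ℝ) d * (d : ℝ) ^ (-(2 + α)) := by
  have hd0' : (1 : ℝ) ≤ d := by exact_mod_cast hd0
  have hn' : (1 : ℝ) ≤ n := by exact_mod_cast hn
  set g : ℤ → ℝ := fun u => max (d : ℝ) |(u : ℝ)| ^ (-(2 + α))
  have hterm : ∀ s ∈ Icc (-n : ℤ) n,
      rieszKernel α (c - x.1) (s - x.2) ≤ g (s - x.2) := by
    intro s hs
    have hz : (c, s) ∈ (box n : Finset (ℤ × ℤ)) := by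
      rw [Int.mem_box]; rw [mem_Icc] at hs; omega
    have := le_max_abs_sub_of_mem_box hd hx hz
    push_cast [g]
    exact rieszKernel_le (by linarith) (by linarith) (by exact_mod_cast this)
  have hcard : ∑ s ∈ Icc (-n : ℤ) n, g (s - x.2) ≤ 3 * n * (d : ℝ) ^ (-(2 + α)) := by
    have hg : ∀ s ∈ Icc (-n : ℤ) n, g (s - x.2) ≤ (d : ℝ) ^ (-(2 + α)) := fun s _ =>
      rpow_le_rpow_of_nonpos (by linarith) (le_max_left _ _) (by linarith)
    have h2n : ((2 * n + 1 : ℕ) : ℝ) ≤ 3 * n := by push_cast; linarith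
    refine (sum_le_card_nsmul _ _ _ hg).trans ?_
    rw [Int.card_Icc, nsmul_eq_mul, show ((n : ℤ) + 1 - -n).toNat = 2 * n + 1 by omega]
    exact mul_le_mul_of_nonneg_right h2n (by positivity)
  have htail : ∑ s ∈ Icc (-n : ℤ) n, g (s - x.2) ≤ 12 * d * (d : ℝ) ^ (-(2 + α)) := by
    rw [← sum_image (g := fun s => s - x.2) fun _ _ _ _ => sub_left_inj.mp, mul_assoc,
      ← rpow_neg_one_add_eq_mul (by linarith)]
    exact sum_max_abs_rpow_le hα hd0' _
  have hD : 0 ≤ (d : ℝ) ^ (-(2 + α)) := by positivity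
  refine (sum_le_sum hterm).trans ?_
  rcases le_total (n : ℝ) d with h | h
  · rw [min_eq_left h]; nlinarith
  · rw [min_eq_right h]; linarith

lemma box_subset_union_sides (n : ℕ) :
    (box n : Finset (ℤ × ℤ)) ⊆ ({-(n : ℤ), (n : ℤ)} ×ˢ Icc (-n : ℤ) n) ∪
      (Icc (-n : ℤ) n ×ˢ {-(n : ℤ), (n : ℤ)}) := by
  intro z hz
  rw [Int.mem_box] at hz
  simp only [mem_union, mem_product, mem_insert, mem_singleton, mem_Icc]
  omega

theorem Zsq_le {α : ℝ} (hα : 0 ≤ α) {m n d : ℕ} (hn : 1 ≤ n) (hd : m + d = n ∨ n + d = m)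
    (hd0 : 1 ≤ d) {x : ℤ × ℤ} (hx : x ∈ box m) :
    Zsq α n (x.1, x.2) ≤ 48 * min (n : ℝ) d * (d : ℝ) ^ (-(2 + α)) := by
  set E : Finset ℤ := {-(n : ℤ), (n : ℤ)}
  set I := Icc (-n : ℤ) n
  set B := 12 * min (n : ℝ) d * (d : ℝ) ^ (-(2 + α))
  have hx' : x.swap ∈ (box m : Finset (ℤ × ℤ)) := by
    rw [Int.mem_box] at hx ⊢; simpa [max_comm] using hx
  have hE : ∀ c ∈ E, c.natAbs = n := by simp [E]
  have hvert : ∀ c ∈ E, ∑ s ∈ I, rieszKernel α (c - x.1) (s - x.2) ≤ B := fun c hc =>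
    sum_rieszKernel_side_le hα hn hd hd0 hx (hE c hc)
  have hhor : ∀ c ∈ E, ∑ s ∈ I, rieszKernel α (s - x.1) (c - x.2) ≤ B := fun c hc =>
    (sum_congr rfl fun _ _ => rieszKernel_comm ..).trans_le
      (sum_rieszKernel_side_le hα hn hd hd0 hx' (hE c hc))
  have hcard : #E = 2 := card_pair (by omega)
  rw [Zsq_eq_sum]
  calc _ ≤ ∑ z ∈ (E ×ˢ I) ∪ (I ×ˢ E), rieszKernel α (z.1 - x.1) (z.2 - x.2) :=
        sum_le_sum_of_subset_of_nonneg (box_subset_union_sides n) fun _ _ _ =>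
          rieszKernel_nonneg ..
    _ ≤ ∑ z ∈ E ×ˢ I, rieszKernel α (z.1 - x.1) (z.2 - x.2) +
        ∑ z ∈ I ×ˢ E, rieszKernel α (z.1 - x.1) (z.2 - x.2) :=
        (le_add_of_nonneg_right (sum_nonneg fun _ _ => rieszKernel_nonneg ..)).trans_eq
          sum_union_inter
    _ ≤ #E • B + #E • B := by
      rw [sum_product, sum_product_right]
      exact add_le_add (sum_le_card_nsmul _ _ _ hvert) (sum_le_card_nsmul _ _ _ hhor)
    _ = _ := by rw [hcard, two_nsmul]; ring

theorem le_Zsq {α : ℝ} (hα : 0 ≤ 2 + α) {m n d : ℕ} (hd : m + d = n ∨ n + d = m)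
    (hd0 : 1 ≤ d) {x : ℤ × ℤ} (hx : x ∈ box m) :
    3 ^ (-(2 + α)) * min (n : ℝ) d * (d : ℝ) ^ (-(2 + α)) ≤ Zsq α n (x.1, x.2) := by
  obtain ⟨b, hb0, hbm, hZ⟩ := exists_Zsq_eq_side α n hx
  rw [hZ, Zsq_eq_sum]
  set k : ℕ := min n d
  set c : ℤ := min b n
  set T : Finset (ℤ × ℤ) := (Ioc (c - k) c).image fun s => ((n : ℤ), s)
  have hT : T ⊆ box n := by
    intro z hz
    obtain ⟨s, hs, rfl⟩ := mem_image.mp hz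
    rw [mem_Ioc] at hs
    rw [Int.mem_box]
    omega
  have hcard : #T = k := by
    rw [card_image_of_injective _ fun _ _ h => (Prod.mk.inj h).2, Int.card_Ioc]
    omega
  have hpt : ∀ z ∈ T, (3 * (d : ℝ)) ^ (-(2 + α)) ≤
      rieszKernel α ((z.1 : ℝ) - m) ((z.2 : ℝ) - b) := by
    intro z hz
    obtain ⟨s, hs, rfl⟩ := mem_image.mp hz
    rw [mem_Ioc] at hs
    have hnm : ((n : ℝ) - m) ^ 2 = (d : ℝ) ^ 2 := by
      rcases hd with h | h <;> rw [← h] <;> push_cast <;> ring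
    have hsb0 : (0 : ℝ) ≤ b - s := by exact_mod_cast (by omega : (0 : ℤ) ≤ b - s)
    have hsb : (b : ℝ) - s ≤ 2 * d := by exact_mod_cast (by omega : b - s ≤ 2 * (d : ℤ))
    have hd1 : (1 : ℝ) ≤ d := by exact_mod_cast hd0
    refine rpow_le_rieszKernel hα (by positivity) ?_ ?_ <;> dsimp only <;> push_cast <;> nlinarith
  calc 3 ^ (-(2 + α)) * min (n : ℝ) d * (d : ℝ) ^ (-(2 + α))
      = #T • (3 * (d : ℝ)) ^ (-(2 + α)) := by
        rw [hcard, nsmul_eq_mul, mul_rpow (by norm_num) (by positivity)]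
        push_cast [k]
        ring
    _ ≤ ∑ z ∈ T, rieszKernel α ((z.1 : ℝ) - m) ((z.2 : ℝ) - b) := card_nsmul_le_sum _ _ _ hpt
    _ ≤ _ := sum_le_sum_of_subset_of_nonneg hT fun _ _ _ => rieszKernel_nonneg ..

lemma min_mem_Icc_mul_div_add {a b : ℝ} (ha : 0 ≤ a) (hb : 0 ≤ b) (hab : 0 < a + b) :
    min a b ∈ Set.Icc (a * b / (a + b)) (2 * (a * b / (a + b))) := by
  rw [Set.mem_Icc, div_le_iff₀ hab, mul_div_assoc', le_div_iff₀ hab]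
  rcases le_total a b with h | h
  · rw [min_eq_left h]; constructor <;> nlinarith
  · rw [min_eq_right h]; constructor <;> nlinarith

theorem Zsq_bounds_inside {α : ℝ} (hα : 0 ≤ α) {m d : ℕ} (hd0 : 1 ≤ d) {x : ℤ × ℤ}
    (hx : x ∈ box m) :
    3 ^ (-(2 + α)) * (d : ℝ) ^ (-(1 + α)) ≤ Zsq α (m + d) (x.1, x.2) ∧
      Zsq α (m + d) (x.1, x.2) ≤ 48 * (d : ℝ) ^ (-(1 + α)) := by
  have hmin : min ((m + d : ℕ) : ℝ) d = d := min_eq_right (by push_cast; linarith)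
  have hd : (0 : ℝ) < d := by exact_mod_cast hd0
  have hlo := le_Zsq (α := α) (by linarith) (Or.inl rfl) hd0 hx
  have hup := Zsq_le hα (by omega) (Or.inl rfl) hd0 hx
  rw [hmin, mul_assoc, ← rpow_neg_one_add_eq_mul hd] at hlo hup
  exact ⟨hlo, hup⟩

theorem Zsq_bounds_outside {α : ℝ} (hα : 0 ≤ α) {n d : ℕ} (hn : 1 ≤ n) (hd0 : 1 ≤ d)
    {x : ℤ × ℤ} (hx : x ∈ box (n + d)) :
    3 ^ (-(2 + α)) * (n / ((n + d : ℕ) * (d : ℝ) ^ (1 + α))) ≤ Zsq α n (x.1, x.2) ∧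
      Zsq α n (x.1, x.2) ≤ 96 * (n / ((n + d : ℕ) * (d : ℝ) ^ (1 + α))) := by
  have hd : (0 : ℝ) < d := by exact_mod_cast hd0
  have hn' : (0 : ℝ) < n := by exact_mod_cast hn
  have hform : (n / ((n + d : ℕ) * (d : ℝ) ^ (1 + α))) =
      n * d / (n + d) * (d : ℝ) ^ (-(2 + α)) := by
    have hpow : (d : ℝ) ^ (2 + α) = d * d ^ (1 + α) := by
      rw [show 2 + α = 1 + (1 + α) by ring, rpow_add hd, rpow_one]
    rw [rpow_neg hd.le, hpow]
    push_cast
    field_simp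
  obtain ⟨hmin_lo, hmin_hi⟩ := min_mem_Icc_mul_div_add hn'.le hd.le (by positivity)
  have hD : 0 ≤ (d : ℝ) ^ (-(2 + α)) := by positivity
  have hlo := le_Zsq (α := α) (by linarith) (Or.inr rfl) hd0 hx
  have hup := Zsq_le hα hn (Or.inr rfl) hd0 hx
  rw [hform]
  constructor
  · refine le_trans ?_ hlo
    rw [mul_assoc _ (min _ _)]
    gcongr
  · refine hup.trans ?_
    nlinarith

/-- two-sided bounds on `Z_n(x)` for `x ∈ D_m = {z ∈ ℤ² : ‖z‖_∞ = m}`, `m ≠ n`. -/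
theorem Zsq_bounds (α : ℝ) (hα : 0 < α) :
    ∃ a : ℝ, 1 < a ∧ ∀ m n : ℕ, 1 ≤ m → 1 ≤ n → m ≠ n →
      ∀ x : ℤ × ℤ, max |x.1| |x.2| = (m : ℤ) →
      (m < n →
        a⁻¹ * ((n : ℝ) - (m : ℝ)) ^ (-(1 + α)) ≤ Zsq α n ((x.1 : ℝ), (x.2 : ℝ)) ∧
        Zsq α n ((x.1 : ℝ), (x.2 : ℝ)) ≤ a * ((n : ℝ) - (m : ℝ)) ^ (-(1 + α))) ∧
      (n < m →
        a⁻¹ * ((n : ℝ) / ((m : ℝ) * ((m : ℝ) - (n : ℝ)) ^ (1 + α))) ≤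
            Zsq α n ((x.1 : ℝ), (x.2 : ℝ)) ∧
        Zsq α n ((x.1 : ℝ), (x.2 : ℝ)) ≤
          a * ((n : ℝ) / ((m : ℝ) * ((m : ℝ) - (n : ℝ)) ^ (1 + α)))) := by
  have h3 : 1 ≤ (3 : ℝ) ^ (2 + α) := one_le_rpow (by norm_num) (by linarith)
  have hinv : (96 * (3 : ℝ) ^ (2 + α))⁻¹ ≤ 3 ^ (-(2 + α)) := by
    rw [rpow_neg (by norm_num), mul_inv]
    exact mul_le_of_le_one_left (by positivity) (by norm_num)
  refine ⟨96 * 3 ^ (2 + α), by linarith, fun m n _ hn _ x hx => ⟨fun hlt => ?_, fun hlt => ?_⟩⟩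
  all_goals rw [← mem_box_iff_max_abs] at hx
  · obtain ⟨d, rfl⟩ := Nat.exists_eq_add_of_le hlt.le
    obtain ⟨hlo, hup⟩ := Zsq_bounds_inside (d := d) hα.le (by omega) hx
    have hQ : 0 ≤ (d : ℝ) ^ (-(1 + α)) := by positivity
    rw [show ((m + d : ℕ) : ℝ) - m = d by push_cast; ring]
    exact ⟨(mul_le_mul_of_nonneg_right hinv hQ).trans hlo,
      hup.trans (mul_le_mul_of_nonneg_right (by linarith) hQ)⟩
  · obtain ⟨d, rfl⟩ := Nat.exists_eq_add_of_le hlt.le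
    obtain ⟨hlo, hup⟩ := Zsq_bounds_outside (d := d) hα.le hn (by omega) hx
    have hQ : 0 ≤ (n : ℝ) / ((n + d : ℕ) * (d : ℝ) ^ (1 + α)) := by positivity
    rw [show ((n + d : ℕ) : ℝ) - n = d by push_cast; ring]
    exact ⟨(mul_le_mul_of_nonneg_right hinv hQ).trans hlo,
      hup.trans (mul_le_mul_of_nonneg_right (by linarith) hQ)⟩
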